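/- For every s ∈ ℚ(√2) ∩ [0, √2], the forward orbit {f^(n)(s) : n ∈ ℕ} is a finite set. -/

import Mathlib

noncomputable section

/-- `β = √2 - 1`. -/
def β : ℝ := Real.sqrt 2 - 1

/-- `ω = √2 + 1`. -/
def ω : ℝ := Real.sqrt 2 + 1

/-- The break points `Δ_i`. -/
def Δ (i : ℤ) : ℝ :=
  if i < 0 then β ^ i.natAbs
  else if i = 0 then β
  else Real.sqrt 2 - β ^ i.natAbs

/-- The intervals `I_i`. -/
def Iint (i : ℤ) : Set ℝ :=
  if i < 0 then Set.Ioc (Δ (i - 1)) (Δ i)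
  else if i = 0 then Set.Ioo β 1
  else Set.Ico (Δ i) (Δ (i + 1))

/-- The defining formula of `f` on the interval `I_i`. -/
def fval (i : ℤ) (s : ℝ) : ℝ :=
  if i < 0 then ω ^ (i.natAbs + 1) * (Δ i - s)
  else if i = 0 then ω * (s - β)
  else ω ^ (i.natAbs + 1) * (s - Δ i)

/-- `f` is the renormalization map: `f 0 = f √2 = 0` and on each interval `I_i`
    it is given by the corresponding affine formula. These conditions determine
    `f` uniquely on `[0, √2]`. -/
def IsLuroth (f : ℝ → ℝ) : Prop :=
  f 0 = 0 ∧ f (Real.sqrt 2) = 0 ∧ ∀ i : ℤ, ∀ s ∈ Iint i, f s = fval i s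

/-- `ℚ(√2)` as a subset of `ℝ`. -/
def QSqrt2 : Set ℝ := {x | ∃ a b : ℚ, x = (a : ℝ) + (b : ℝ) * Real.sqrt 2}

/-- `ℤ[√2]` as a subset of `ℝ`. -/
def ZSqrt2 : Set ℝ := {x | ∃ m n : ℤ, x = (m : ℝ) + (n : ℝ) * Real.sqrt 2}

/-- `M_d = {s ∈ [0,√2] : d·s ∈ ℤ[√2]}`. -/
def Mset (d : ℤ) : Set ℝ :=
  {s | s ∈ Set.Icc 0 (Real.sqrt 2) ∧ (d : ℝ) * s ∈ ZSqrt2}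

/-!
Choose `d ≥ 1` with `d s ∈ ℤ[√2]`. On `I_i` the map `f` is `x ↦ ±ω^(|i|+1) (x - Δ_i)` with
`Δ_i ∈ ℤ[√2]` and `ω` a unit, so `d f(x) ∈ ℤ[√2]` again. The Galois conjugation `y ↦ y'`
(`√2 ↦ -√2`) sends `ω` to `-β`, and `β^(|i|+1) |Δ_i'| ≤ 1` for every `i`; hence
`|(d f(x))'| ≤ β |(d x)'| + d`, and the bound `|(d x)'| ≤ K` is preserved once `d ≤ (1 - β) K`.
Only finitely many `y ∈ ℤ[√2]` satisfy `|y| ≤ d √2` and `|y'| ≤ K`, so the orbit is finite.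
-/

namespace Luroth

open Set Real

def σ₁ : ℤ√2 →+* ℝ := Zsqrtd.lift ⟨√2, by norm_num⟩

def σ₂ : ℤ√2 →+* ℝ := Zsqrtd.lift ⟨-√2, by norm_num⟩

def ωz : ℤ√2 := ⟨1, 1⟩

def βz : ℤ√2 := ⟨-1, 1⟩

@[simp] lemma σ₁_ωz : σ₁ ωz = ω := by simp [σ₁, ωz, ω, add_comm]
@[simp] lemma σ₂_ωz : σ₂ ωz = -β := by simp [σ₂, ωz, β]; ring
@[simp] lemma σ₁_βz : σ₁ βz = β := by simp [σ₁, βz, β]; ring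
@[simp] lemma σ₂_βz : σ₂ βz = -ω := by simp [σ₂, βz, ω]
@[simp] lemma σ₁_sqrtd : σ₁ Zsqrtd.sqrtd = √2 := by simp [σ₁]
@[simp] lemma σ₂_sqrtd : σ₂ Zsqrtd.sqrtd = -√2 := by simp [σ₂]

lemma sq_sqrt_two : √2 ^ 2 = 2 := sq_sqrt zero_le_two
lemma β_pos : 0 < β := by unfold β; linarith [one_lt_sqrt_two]
lemma β_lt_one : β < 1 := by unfold β; linarith [sqrt_two_lt_three_halves]
lemma ω_pos : 0 < ω := by unfold ω; linarith [one_lt_sqrt_two]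
lemma β_mul_ω : β * ω = 1 := by unfold β ω; nlinarith [sq_sqrt_two]

lemma β_pow_mul_ω_pow (m : ℕ) : β ^ m * ω ^ m = 1 := by rw [← mul_pow, β_mul_ω, one_pow]

lemma ω_pow_succ_mul_sub (m : ℕ) : ω ^ (m + 1) * (β ^ m - β ^ (m + 1)) = √2 :=
  calc ω ^ (m + 1) * (β ^ m - β ^ (m + 1)) = (β ^ m * ω ^ m) * (ω - β * ω) := by ring
    _ = √2 := by rw [β_pow_mul_ω_pow, β_mul_ω]; unfold ω; ring

def branchSign (i : ℤ) : ℤ := if i < 0 then -1 else 1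

def branchSlope (i : ℤ) : ℤ√2 := branchSign i * ωz ^ (i.natAbs + 1)

def branchPoint (i : ℤ) : ℤ√2 :=
  if i < 0 then βz ^ i.natAbs else if i = 0 then βz else Zsqrtd.sqrtd - βz ^ i.natAbs

lemma σ₁_branchPoint (i : ℤ) : σ₁ (branchPoint i) = Δ i := by
  unfold branchPoint Δ; split_ifs <;> simp

lemma σ₁_branchSlope (i : ℤ) : σ₁ (branchSlope i) = branchSign i * ω ^ (i.natAbs + 1) := by
  simp [branchSlope]

lemma fval_eq (i : ℤ) (s : ℝ) :
    fval i s = ω ^ (i.natAbs + 1) * (branchSign i * (s - Δ i)) := by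
  unfold fval branchSign
  split_ifs with h₁ h₂
  · push_cast; ring
  · subst h₂; simp [Δ]
  · push_cast; ring

lemma abs_σ₂_branchSlope (i : ℤ) : |σ₂ (branchSlope i)| = β ^ (i.natAbs + 1) := by
  have : |(branchSign i : ℝ)| = 1 := by unfold branchSign; split_ifs <;> simp
  simp [branchSlope, abs_mul, this, abs_of_pos β_pos]

lemma abs_σ₂_branchSlope_mul_branchPoint_le_one (i : ℤ) :
    |σ₂ (branchSlope i * branchPoint i)| ≤ 1 := by
  rw [map_mul, abs_mul, abs_σ₂_branchSlope]
  set m := i.natAbs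
  have hβ := β_pos
  unfold branchPoint
  split_ifs with h₁ h₂
  · calc β ^ (m + 1) * |σ₂ (βz ^ m)| = β * (β ^ m * ω ^ m) := by
          simp [abs_of_pos ω_pos]; ring
      _ ≤ 1 := by rw [β_pow_mul_ω_pow]; linarith [β_lt_one]
  · simp [h₂, m, abs_of_pos ω_pos, β_mul_ω]
  · calc β ^ (m + 1) * |σ₂ (Zsqrtd.sqrtd - βz ^ m)|
        ≤ β ^ (m + 1) * (√2 + ω ^ m) := by
          gcongr
          simpa [abs_of_pos ω_pos, abs_of_pos (sqrt_pos.2 two_pos)] using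
            abs_sub (-√2) ((-ω) ^ m)
      _ = β ^ (m + 1) * √2 + β * (β ^ m * ω ^ m) := by ring
      _ ≤ β ^ 2 * √2 + β := by
          have : β ^ (m + 1) ≤ β ^ 2 := pow_le_pow_of_le_one hβ.le β_lt_one.le (by omega)
          rw [β_pow_mul_ω_pow, mul_one]
          gcongr
      _ ≤ 1 := by unfold β; nlinarith [sq_sqrt_two, sqrt_two_lt_three_halves]

lemma branchSign_mul_sub_mem_Icc {i : ℤ} {s : ℝ} (hs : s ∈ Iint i) :
    (branchSign i : ℝ) * (s - Δ i) ∈ Icc 0 (β ^ i.natAbs - β ^ (i.natAbs + 1)) := by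
  unfold Iint at hs
  unfold branchSign
  split_ifs at hs ⊢ with h₁ h₂
  · have e : (i - 1).natAbs = i.natAbs + 1 := by omega
    simp only [Δ, if_pos h₁, if_pos (show i - 1 < 0 by omega), e, mem_Ioc] at hs ⊢
    constructor <;> push_cast <;> linarith
  · subst h₂
    simp only [Δ, mem_Ioo] at hs ⊢
    constructor <;> push_cast <;> linarith
  · have e : (i + 1).natAbs = i.natAbs + 1 := by omega
    simp only [Δ, if_neg h₁, if_neg h₂, if_neg (show ¬ i + 1 < 0 by omega),
      if_neg (show i + 1 ≠ 0 by omega), e, mem_Ico] at hs ⊢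
    constructor <;> push_cast <;> linarith

lemma fval_mem_Icc {i : ℤ} {s : ℝ} (hs : s ∈ Iint i) : fval i s ∈ Icc 0 √2 := by
  obtain ⟨h₀, h₁⟩ := branchSign_mul_sub_mem_Icc hs
  rw [fval_eq, ← ω_pow_succ_mul_sub i.natAbs]
  have hω := pow_pos ω_pos (i.natAbs + 1)
  exact ⟨mul_nonneg hω.le h₀, mul_le_mul_of_nonneg_left h₁ hω.le⟩

lemma exists_mem_Iint {s : ℝ} (hs : s ∈ Ioo 0 √2) : ∃ i, s ∈ Iint i := by
  obtain ⟨hs₀, hs₂⟩ := hs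
  have hβ := β_pos
  have hβ₁ := β_lt_one
  rcases le_or_gt s β with hsβ | hsβ
  · obtain ⟨m, hm₁, hm₂⟩ := exists_nat_pow_near_of_lt_one hs₀ (by linarith) hβ hβ₁
    have hm : m ≠ 0 := by rintro rfl; rw [zero_add, pow_one] at hm₁; linarith
    refine ⟨-m, ?_⟩
    have e : (-(m : ℤ) - 1).natAbs = m + 1 := by omega
    simp only [Iint, Δ, if_pos (show -(m : ℤ) < 0 by omega),
      if_pos (show -(m : ℤ) - 1 < 0 by omega), e, Int.natAbs_neg, Int.natAbs_natCast, mem_Ioc]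
    exact ⟨hm₁, hm₂⟩
  rcases lt_or_ge s 1 with hs₁ | hs₁
  · exact ⟨0, by simpa [Iint] using ⟨hsβ, hs₁⟩⟩
  · obtain ⟨m, hm₁, hm₂⟩ := exists_nat_pow_near_of_lt_one (x := √2 - s) (by linarith)
      (by unfold β at *; linarith) hβ hβ₁
    have hm : m ≠ 0 := by
      rintro rfl; rw [zero_add, pow_one] at hm₁; unfold β at hm₁; linarith
    refine ⟨m, ?_⟩
    have e : ((m : ℤ) + 1).natAbs = m + 1 := by omega
    simp only [Iint, Δ, if_neg (show ¬ (m : ℤ) < 0 by omega),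
      if_neg (show (m : ℤ) ≠ 0 by omega), if_neg (show ¬ (m : ℤ) + 1 < 0 by omega),
      if_neg (show (m : ℤ) + 1 ≠ 0 by omega), e, Int.natAbs_natCast, mem_Ico]
    constructor <;> linarith

def conjBounded (d : ℕ) (K : ℝ) : Set ℝ :=
  {x | x ∈ Icc 0 √2 ∧ ∃ z : ℤ√2, d * x = σ₁ z ∧ |σ₂ z| ≤ K}

theorem _root_.IsLuroth.mapsTo_conjBounded {f : ℝ → ℝ} (hf : IsLuroth f) {d : ℕ} {K : ℝ}
    (hK : d + β * K ≤ K) : MapsTo f (conjBounded d K) (conjBounded d K) := by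
  have hK₀ : 0 ≤ K := by nlinarith [β_lt_one, d.cast_nonneg (α := ℝ)]
  have h₀ : (0 : ℝ) ∈ conjBounded d K := ⟨⟨le_rfl, sqrt_nonneg 2⟩, 0, by simp, by simpa⟩
  rintro x ⟨hx, z, hz, hzK⟩
  rcases hx.1.eq_or_lt with rfl | hx₀
  · rwa [hf.1]
  rcases hx.2.eq_or_lt with rfl | hx₂
  · rwa [hf.2.1]
  obtain ⟨i, hi⟩ := exists_mem_Iint ⟨hx₀, hx₂⟩
  set u := branchSlope i
  set γ := branchPoint i
  rw [hf.2.2 i x hi]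
  refine ⟨fval_mem_Icc hi, u * (z - d * γ), ?_, ?_⟩
  · rw [fval_eq, map_mul, map_sub, map_mul, map_natCast, ← hz, σ₁_branchSlope, σ₁_branchPoint]
    ring
  · have hβ : β ^ (i.natAbs + 1) ≤ β := pow_le_of_le_one β_pos.le β_lt_one.le (by omega)
    calc |σ₂ (u * (z - d * γ))| = |σ₂ u * σ₂ z - d * σ₂ (u * γ)| := by
          simp only [map_mul, map_sub, map_natCast]; ring_nf
      _ ≤ |σ₂ u| * |σ₂ z| + d * |σ₂ (u * γ)| := by
          simpa [abs_mul] using abs_sub (σ₂ u * σ₂ z) (d * σ₂ (u * γ))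
      _ ≤ β * K + d * 1 := by
          rw [abs_σ₂_branchSlope]
          gcongr
          · exact β_pos.le
          · exact abs_σ₂_branchSlope_mul_branchPoint_le_one i
      _ ≤ K := by linarith

lemma finite_setOf_abs_σ_le (A B : ℝ) : {z : ℤ√2 | |σ₁ z| ≤ A ∧ |σ₂ z| ≤ B}.Finite := by
  set N := ⌈A + B⌉
  refine ((finite_Icc (-N) N).prod (finite_Icc (-N) N)).image (fun p => (⟨p.1, p.2⟩ : ℤ√2))
    |>.subset ?_
  rintro z ⟨hA, hB⟩
  have h₁ : σ₁ z = z.re + z.im * √2 := by simp [σ₁]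
  have h₂ : σ₂ z = z.re - z.im * √2 := by simp [σ₂]; ring
  have bound {n : ℤ} (hn : |(n : ℝ)| ≤ A + B) : n ∈ Icc (-N) N :=
    abs_le.mp (by exact_mod_cast hn.trans (Int.le_ceil _))
  refine ⟨(z.re, z.im), ⟨bound ?_, bound ?_⟩, rfl⟩
  · rw [abs_le] at hA hB ⊢; constructor <;> nlinarith
  · have := one_lt_sqrt_two
    rw [abs_le] at hA hB ⊢; constructor <;> nlinarith

lemma finite_conjBounded {d : ℕ} (hd : d ≠ 0) (K : ℝ) : (conjBounded d K).Finite := by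
  refine ((finite_setOf_abs_σ_le (d * √2) K).image fun z => σ₁ z / d).subset ?_
  rintro x ⟨⟨hx₀, hx₂⟩, z, hz, hzK⟩
  have hd' : (0 : ℝ) < d := by positivity
  refine ⟨z, ⟨?_, hzK⟩, show σ₁ z / d = x by rw [← hz]; field_simp⟩
  rw [← hz, abs_of_nonneg (by positivity)]
  gcongr

lemma exists_nat_mul_eq_σ₁ {s : ℝ} (hs : s ∈ QSqrt2) : ∃ d : ℕ, d ≠ 0 ∧ ∃ z, d * s = σ₁ z := by
  obtain ⟨a, b, rfl⟩ := hs
  refine ⟨a.den * b.den, by positivity, ⟨a.num * b.den, b.num * a.den⟩, ?_⟩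
  simp only [σ₁, Zsqrtd.lift_apply_apply]
  rw [Rat.cast_def a, Rat.cast_def b]
  push_cast
  field_simp

end Luroth

open Luroth in
/-- for every `s ∈ ℚ(√2) ∩ [0,√2]`, the forward orbit of `s`
under `f` is a finite set. -/
theorem luroth_orbit_finite (f : ℝ → ℝ) (hf : IsLuroth f) :
    ∀ s ∈ QSqrt2 ∩ Set.Icc (0 : ℝ) (Real.sqrt 2),
      Set.Finite (Set.range fun n : ℕ => f^[n] s) := by
  rintro s ⟨hsQ, hs⟩
  obtain ⟨d, hd, z, hz⟩ := exists_nat_mul_eq_σ₁ hsQ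
  set K := max |σ₂ z| (d / (1 - β))
  have hK : d + β * K ≤ K := by
    have : d / (1 - β) ≤ K := le_max_right _ _
    rw [div_le_iff₀ (by linarith [β_lt_one])] at this
    linarith
  have hsK : s ∈ conjBounded d K := ⟨hs, z, hz, le_max_left _ _⟩
  exact (finite_conjBounded hd K).subset <| Set.range_subset_iff.2 fun n =>
    (hf.mapsTo_conjBounded hK).iterate n hsK
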